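/- Let (Ω, F, P) be a probability space, D ≥ 1 an integer, ψ₀ ∈ ℝ^D with at least one nonzero coordinate, and Σ₀ a positive semidefinite D×D matrix with strictly positive diagonal entries σ²_{ψ,0,d}. Let ψ_n : Ω → ℝ^D be random vectors with √n(ψ_n − ψ₀) converging in distribution to N(0, Σ₀); let σ²_n : Ω → (0, ∞)^D be random vectors with max_d |σ²_{n,d} − σ²_{ψ,0,d}| → 0 in probability; and let λ_n* : Ω → [0, ∞) be random variables with Crit(λ_n*, ψ_n, σ²_n, n) ≤ inf_{λ ≥ 0} Crit(λ, ψ_n, σ²_n, n) + ε_n, where ε_n → 0 in probability. Then λ_n* → 0 in probability. -/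

import Mathlib

/-!
At `λ = 0` soft thresholding is the identity, so the criterion is `Σ_d s²_d / n`, which is
`O_P(1/n)`. At `λ ≥ ε`, a coordinate with `|ψ_d| ≥ ε` has bias at least `ε / 2` as soon as
`s²_d / n ≤ ε² / 4`, because `x - S_λ(x) ≥ min x ε` pointwise; so the criterion is at least
`ε² / 4` there. Since the `√n`-rescaled errors converge in distribution they are bounded in
probability, hence `ψ_n → ψ₀` in probability; together with `σ²_n` bounded and `ε_n → 0` in
probability, a near minimiser `λ_n* ≥ ε` is confined to events of vanishing probability.
-/

open MeasureTheory ProbabilityTheory Filter Finset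
open scoped Topology

/-- The soft-thresholding operator `S_λ : ℝ → ℝ`:
`S_λ(x) = x + λ` if `x < −λ`, `S_λ(x) = 0` if `|x| ≤ λ`, and `S_λ(x) = x − λ` if `x > λ`. -/
noncomputable def softThreshold (lam x : ℝ) : ℝ :=
  if x < -lam then x + lam else if x ≤ lam then 0 else x - lam

/-- `μ_λ(m, s², n)`: the mean of `S_λ(Z)` where `Z ~ N(m, s²/n)`. -/
noncomputable def softThresholdMean (lam m s2 : ℝ) (n : ℕ) : ℝ :=
  ∫ z, softThreshold lam z ∂(gaussianReal m (Real.toNNReal (s2 / n)))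

/-- `σ²_λ(m, s², n)`: the variance of `S_λ(Z)` where `Z ~ N(m, s²/n)`. -/
noncomputable def softThresholdVar (lam m s2 : ℝ) (n : ℕ) : ℝ :=
  (∫ z, softThreshold lam z ^ 2 ∂(gaussianReal m (Real.toNNReal (s2 / n)))) -
    softThresholdMean lam m s2 n ^ 2

/-- The L1 tuning criterion
`Crit(λ, ψ, s², n) = Σ_d [(μ_λ(ψ_d, s²_d, n) − ψ_d)² + σ²_λ(ψ_d, s²_d, n)]`. -/
noncomputable def l1Crit {D : ℕ} (lam : ℝ) (ψ s2 : Fin D → ℝ) (n : ℕ) : ℝ :=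
  ∑ d, ((softThresholdMean lam (ψ d) (s2 d) n - ψ d) ^ 2 + softThresholdVar lam (ψ d) (s2 d) n)

/-- The centered multivariate Gaussian measure `N(0, Σ)` on `ℝ^D` with positive semidefinite
covariance matrix `Σ`, realized as the pushforward of a product of `D` independent standard
Gaussians under multiplication by the positive semidefinite square root of `Σ`. -/
noncomputable def multivariateGaussian {D : ℕ} {S : Matrix (Fin D) (Fin D) ℝ}
    (hS : S.PosSemidef) : Measure (Fin D → ℝ) :=
  Measure.map (fun x => ((hS.1.eigenvectorUnitary : Matrix (Fin D) (Fin D) ℝ) *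
      Matrix.diagonal (Real.sqrt ∘ hS.1.eigenvalues) *
      (star hS.1.eigenvectorUnitary : Matrix (Fin D) (Fin D) ℝ)).mulVec x) (Measure.pi fun _ : Fin D => gaussianReal 0 1)

/-- Convergence in distribution: weak convergence of the pushforward laws. -/
def TendstoInDistribution {Ω E : Type*} [MeasurableSpace Ω] [MeasurableSpace E]
    [TopologicalSpace E] (P : Measure Ω) (X : ℕ → Ω → E) (ν : Measure E) : Prop :=
  ∀ f : BoundedContinuousFunction E ℝ,
    Tendsto (fun n => ∫ ω, f (X n ω) ∂P) atTop (𝓝 (∫ x, f x ∂ν))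

/-- Convergence in probability to a constant: `P(‖X_n − c‖ > ε) → 0` for every `ε > 0`.
(For `E = Fin D → ℝ` the norm is the sup-norm `max_d`.) -/
def TendstoInProbability {Ω E : Type*} [MeasurableSpace Ω] [NormedAddCommGroup E]
    (P : Measure Ω) (X : ℕ → Ω → E) (c : E) : Prop :=
  ∀ ε : ℝ, 0 < ε → Tendsto (fun n => P {ω | ε < ‖X n ω - c‖}) atTop (𝓝 0)

open scoped NNReal ENNReal

section SoftThreshold

variable {lam : ℝ}

lemma measurable_softThreshold (lam : ℝ) : Measurable (softThreshold lam) :=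
  Measurable.ite (measurableSet_lt measurable_id measurable_const) (measurable_id.add_const _)
    (Measurable.ite (measurableSet_le measurable_id measurable_const) measurable_const
      (measurable_id.sub_const _))

lemma softThreshold_zero_left : softThreshold 0 = id := by
  ext x
  unfold softThreshold
  split_ifs <;> simp only [id] <;> linarith

lemma softThreshold_neg (hl : 0 ≤ lam) (x : ℝ) :
    softThreshold lam (-x) = -softThreshold lam x := by
  unfold softThreshold
  split_ifs <;> linarith

lemma abs_softThreshold_le (hl : 0 ≤ lam) (x : ℝ) : |softThreshold lam x| ≤ |x| := by
  unfold softThreshold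
  split_ifs
  · rw [abs_of_neg (by linarith), abs_of_neg (by linarith)]; linarith
  · simp
  · rw [abs_of_pos (by linarith), abs_of_pos (by linarith)]; linarith

lemma min_le_sub_softThreshold {ε : ℝ} (hlam : ε ≤ lam) (x : ℝ) :
    min x ε ≤ x - softThreshold lam x := by
  unfold softThreshold
  split_ifs <;> cases min_cases x ε <;> linarith

/-- `x - S_λ(x) ≥ min x ε ≥ ε - |x - m|`, and `|x - m| ≤ (x - m)² / ε + ε / 4` by AM-GM. -/
lemma sub_softThreshold_ge {ε m : ℝ} (hε : 0 < ε) (hlam : ε ≤ lam) (hm : ε ≤ m) (x : ℝ) :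
    3 * ε / 4 - (x - m) ^ 2 / ε ≤ x - softThreshold lam x := by
  have amgm : m - x ≤ (x - m) ^ 2 / ε + ε / 4 := by
    rw [div_add' _ _ _ hε.ne', le_div_iff₀ hε]
    nlinarith [sq_nonneg (m - x - ε / 2)]
  have hsq : 0 ≤ (x - m) ^ 2 / ε := by positivity
  have := min_le_sub_softThreshold hlam x
  cases min_cases x ε <;> linarith

end SoftThreshold

section Gaussian

variable {lam : ℝ} (m : ℝ) (v : ℝ≥0)

lemma memLp_softThreshold_gaussianReal (hl : 0 ≤ lam) :
    MemLp (softThreshold lam) 2 (gaussianReal m v) :=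
  (memLp_id_gaussianReal 2).mono (measurable_softThreshold lam).aestronglyMeasurable
    (.of_forall fun x => by simpa only [Real.norm_eq_abs, id] using abs_softThreshold_le hl x)

lemma integral_sub_sq_gaussianReal : ∫ x, (x - m) ^ 2 ∂gaussianReal m v = v := by
  simpa only [variance_id_gaussianReal, id, integral_id_gaussianReal] using
    (variance_eq_integral (μ := gaussianReal m v) aemeasurable_id).symm

lemma softThresholdVar_eq_variance (hl : 0 ≤ lam) (s2 : ℝ) (n : ℕ) :
    softThresholdVar lam m s2 n = Var[softThreshold lam; gaussianReal m (s2 / n).toNNReal] := by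
  rw [variance_eq_sub (memLp_softThreshold_gaussianReal m _ hl)]
  rfl

lemma softThresholdVar_nonneg (hl : 0 ≤ lam) (s2 : ℝ) (n : ℕ) :
    0 ≤ softThresholdVar lam m s2 n :=
  softThresholdVar_eq_variance m hl s2 n ▸ variance_nonneg _ _

lemma softThresholdMean_zero_left (s2 : ℝ) (n : ℕ) : softThresholdMean 0 m s2 n = m := by
  simp only [softThresholdMean, softThreshold_zero_left, id, integral_id_gaussianReal]

lemma softThresholdVar_zero_left {s2 : ℝ} (hs2 : 0 ≤ s2) (n : ℕ) :
    softThresholdVar 0 m s2 n = s2 / n := by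
  rw [softThresholdVar_eq_variance m le_rfl, softThreshold_zero_left, variance_id_gaussianReal,
    Real.coe_toNNReal _ (by positivity)]

lemma softThresholdMean_neg_left (hl : 0 ≤ lam) (s2 : ℝ) (n : ℕ) :
    softThresholdMean lam (-m) s2 n = -softThresholdMean lam m s2 n := by
  rw [softThresholdMean, softThresholdMean, ← gaussianReal_map_neg,
    integral_map measurable_neg.aemeasurable (measurable_softThreshold lam).aestronglyMeasurable]
  simp only [softThreshold_neg hl, integral_neg]

lemma le_sub_softThresholdMean {ε s2 : ℝ} {n : ℕ} (hε : 0 < ε) (hlam : ε ≤ lam) (hm : ε ≤ m)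
    (hv : s2 / n ≤ ε ^ 2 / 4) :
    ε / 2 ≤ m - softThresholdMean lam m s2 n := by
  set v := (s2 / n).toNNReal
  have hv' : (v : ℝ) / ε ≤ ε / 4 := by
    rw [div_le_iff₀ hε, Real.coe_toNNReal']
    exact max_le (by nlinarith) (by positivity)
  have hS := (memLp_softThreshold_gaussianReal m v (hε.le.trans hlam)).integrable one_le_two
  have hid : Integrable (fun x => x) (gaussianReal m v) :=
    (memLp_id_gaussianReal 1).integrable le_rfl
  have hsq : Integrable (fun x => (x - m) ^ 2) (gaussianReal m v) :=
    ((memLp_id_gaussianReal 2).sub (memLp_const m)).integrable_sq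
  calc ε / 2 ≤ 3 * ε / 4 - v / ε := by linarith
    _ = ∫ x, (3 * ε / 4 - (x - m) ^ 2 / ε) ∂gaussianReal m v := by
      rw [integral_sub (integrable_const _) (hsq.div_const ε), integral_const, integral_div,
        integral_sub_sq_gaussianReal, probReal_univ, one_smul]
    _ ≤ ∫ x, (x - softThreshold lam x) ∂gaussianReal m v :=
      integral_mono ((integrable_const _).sub (hsq.div_const ε)) (hid.sub hS)
        (sub_softThreshold_ge hε hlam hm)
    _ = m - softThresholdMean lam m s2 n := by
      rw [integral_sub hid hS, integral_id_gaussianReal]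
      rfl

lemma le_abs_softThresholdMean_sub {ε s2 : ℝ} {n : ℕ} (hε : 0 < ε) (hlam : ε ≤ lam)
    (hm : ε ≤ |m|) (hv : s2 / n ≤ ε ^ 2 / 4) :
    ε / 2 ≤ |softThresholdMean lam m s2 n - m| := by
  rcases le_total 0 m with hm0 | hm0
  · rw [abs_of_nonneg hm0] at hm
    exact (le_sub_softThresholdMean m hε hlam hm hv).trans
      ((le_abs_self _).trans_eq (abs_sub_comm _ _))
  · rw [abs_of_nonpos hm0] at hm
    have := le_sub_softThresholdMean (-m) hε hlam hm hv
    rw [softThresholdMean_neg_left m (hε.le.trans hlam)] at this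
    exact this.trans (by rw [neg_sub_neg]; exact le_abs_self _)

end Gaussian

section Criterion

variable {D : ℕ} {lam : ℝ} (ψ s2 : Fin D → ℝ) (n : ℕ)

lemma l1Crit_nonneg (hl : 0 ≤ lam) : 0 ≤ l1Crit lam ψ s2 n :=
  Finset.sum_nonneg fun _ _ => add_nonneg (sq_nonneg _) (softThresholdVar_nonneg _ hl _ _)

lemma sq_softThresholdMean_sub_le_l1Crit (hl : 0 ≤ lam) (d : Fin D) :
    (softThresholdMean lam (ψ d) (s2 d) n - ψ d) ^ 2 ≤ l1Crit lam ψ s2 n :=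
  (le_add_of_nonneg_right (softThresholdVar_nonneg _ hl _ _)).trans
    (Finset.single_le_sum (f := fun d => (softThresholdMean lam (ψ d) (s2 d) n - ψ d) ^ 2 +
      softThresholdVar lam (ψ d) (s2 d) n)
      (fun _ _ => add_nonneg (sq_nonneg _) (softThresholdVar_nonneg _ hl _ _)) (mem_univ d))

lemma l1Crit_zero_left {s2 : Fin D → ℝ} (hs2 : ∀ d, 0 ≤ s2 d) :
    l1Crit 0 ψ s2 n = (∑ d, s2 d) / n := by
  simp only [l1Crit, softThresholdMean_zero_left, sub_self, softThresholdVar_zero_left _ (hs2 _),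
    Finset.sum_div]
  simp

lemma iInf_l1Crit_le_l1Crit_zero :
    ⨅ lam : {lam : ℝ // 0 ≤ lam}, l1Crit lam.1 ψ s2 n ≤ l1Crit 0 ψ s2 n :=
  ciInf_le ⟨0, by rintro _ ⟨lam, rfl⟩; exact l1Crit_nonneg ψ s2 n lam.2⟩
    (⟨0, le_rfl⟩ : {lam : ℝ // 0 ≤ lam})

lemma lt_of_l1Crit_le_iInf_add {ε e : ℝ} {s2 : Fin D → ℝ} {d : Fin D} (hε : 0 < ε) (hl : 0 ≤ lam)
    (hψ : ε ≤ |ψ d|) (hs2 : ∀ d, 0 ≤ s2 d) (hsum : (∑ d, s2 d) / n < ε ^ 2 / 8)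
    (he : e ≤ ε ^ 2 / 8)
    (hnear : l1Crit lam ψ s2 n ≤ (⨅ lam : {lam : ℝ // 0 ≤ lam}, l1Crit lam.1 ψ s2 n) + e) :
    lam < ε := by
  by_contra! hlam
  have hvar : s2 d / n ≤ ε ^ 2 / 4 :=
    calc s2 d / n ≤ (∑ d, s2 d) / n :=
          div_le_div_of_nonneg_right (single_le_sum (fun d _ => hs2 d) (mem_univ d)) n.cast_nonneg
      _ ≤ ε ^ 2 / 4 := by linarith [sq_nonneg ε]
  have hbias := le_abs_softThresholdMean_sub (ψ d) hε hlam hψ hvar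
  have hsq : ε ^ 2 / 4 ≤ (softThresholdMean lam (ψ d) (s2 d) n - ψ d) ^ 2 := by
    nlinarith [sq_abs (softThresholdMean lam (ψ d) (s2 d) n - ψ d)]
  have := iInf_l1Crit_le_l1Crit_zero ψ s2 n
  rw [l1Crit_zero_left ψ n hs2] at this
  linarith [sq_softThresholdMean_sub_le_l1Crit ψ s2 n hl d]

end Criterion

section PiNorm

variable {ι : Type*} [Fintype ι] {x y : ι → ℝ} {r : ℝ}

lemma abs_sub_apply_le_of_norm_sub_le (h : ‖x - y‖ ≤ r) (i : ι) : |x i - y i| ≤ r :=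
  (norm_le_pi_norm (x - y) i).trans h

lemma abs_apply_sub_le_of_norm_sub_le (h : ‖x - y‖ ≤ r) (i : ι) : |y i| - r ≤ |x i| := by
  linarith [abs_sub_apply_le_of_norm_sub_le h i, abs_sub_abs_le_abs_sub (y i) (x i),
    abs_sub_comm (y i) (x i)]

lemma sum_le_sum_add_of_norm_sub_le (h : ‖x - y‖ ≤ r) : ∑ i, x i ≤ ∑ i, (y i + r) :=
  sum_le_sum fun i _ => by linarith [(abs_le.1 (abs_sub_apply_le_of_norm_sub_le h i)).2]

end PiNorm

section Probability

variable {Ω E : Type*} [MeasurableSpace Ω] {P : Measure Ω}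
  [NormedAddCommGroup E] [MeasurableSpace E] [OpensMeasurableSpace E]

lemma tendsto_measure_norm_gt_atTop (ν : Measure E) [IsFiniteMeasure ν] :
    Tendsto (fun r : ℝ => ν {x | r < ‖x‖}) atTop (𝓝 0) := by
  have hempty : ⋂ r : ℝ, {x : E | r < ‖x‖} = ∅ :=
    Set.eq_empty_of_forall_notMem fun x hx => lt_irrefl ‖x‖ (Set.mem_iInter.1 hx ‖x‖)
  simpa only [hempty, measure_empty, Function.comp_def] using tendsto_measure_iInter_atTop
    (fun r => (measurableSet_lt measurable_const measurable_norm).nullMeasurableSet)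
    (fun r s hrs x (hx : s < ‖x‖) => hrs.trans_lt hx) ⟨0, measure_ne_top ν _⟩

/-- Test against a continuous cutoff vanishing on the ball of radius `r` and equal to `1` off the
ball of radius `r + 1`, where `r` is chosen with `ν {r < ‖x‖} < η`. -/
lemma TendstoInDistribution.exists_eventually_measure_norm_gt_lt [IsFiniteMeasure P]
    {Y : ℕ → Ω → E} {ν : Measure E} [IsFiniteMeasure ν] (hY : ∀ n, AEMeasurable (Y n) P)
    (h : TendstoInDistribution P Y ν) {η : ℝ≥0∞} (hη : 0 < η) :
    ∃ M : ℝ, ∀ᶠ n in atTop, P {ω | M < ‖Y n ω‖} < η := by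
  obtain ⟨r, hr⟩ := ((tendsto_measure_norm_gt_atTop ν).eventually (gt_mem_nhds hη)).exists
  obtain ⟨f, hf0, hf1, hf01⟩ := exists_bounded_zero_one_of_closed (s := {x : E | ‖x‖ ≤ r})
    (t := {x | r + 1 ≤ ‖x‖}) (isClosed_le continuous_norm continuous_const)
    (isClosed_le continuous_const continuous_norm)
    (Set.disjoint_left.2 fun x (hx : ‖x‖ ≤ r) (hx' : r + 1 ≤ ‖x‖) => by linarith)
  have hlim : ENNReal.ofReal (∫ x, f x ∂ν) < η :=
    lt_of_le_of_lt (integral_le_measure (fun x _ => (hf01 x).2) fun x hx => by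
      rw [hf0 (show ‖x‖ ≤ r from not_lt.1 hx)]; rfl) hr
  refine ⟨r + 1, ((ENNReal.continuous_ofReal.tendsto _).comp (h f)).eventually
    (gt_mem_nhds hlim) |>.mono fun n hn => lt_of_le_of_lt ?_ hn⟩
  refine Integrable.measure_le_integral ?_ (.of_forall fun ω => (hf01 _).1) fun ω hω => ?_
  · exact (integrable_const ‖f‖).mono'
      (f.continuous.measurable.comp_aemeasurable (hY n)).aestronglyMeasurable
      (.of_forall fun ω => f.norm_coe_le_norm _)
  · rw [hf1 (show r + 1 ≤ ‖Y n ω‖ from le_of_lt hω)]; rfl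

lemma TendstoInDistribution.tendstoInProbability_of_sqrt_smul [IsFiniteMeasure P]
    [NormedSpace ℝ E] {X : ℕ → Ω → E} {c : E} {ν : Measure E} [IsFiniteMeasure ν]
    (hX : ∀ n : ℕ, AEMeasurable (fun ω => Real.sqrt n • (X n ω - c)) P)
    (h : TendstoInDistribution P (fun n ω => Real.sqrt n • (X n ω - c)) ν) :
    TendstoInProbability P X c := by
  intro δ hδ
  refine ENNReal.tendsto_nhds_zero.2 fun η hη => ?_
  obtain ⟨M, hM⟩ := h.exists_eventually_measure_norm_gt_lt hX hη
  have hsqrt : ∀ᶠ n : ℕ in atTop, M < Real.sqrt n * δ :=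
    ((Real.tendsto_sqrt_atTop.comp tendsto_natCast_atTop_atTop).atTop_mul_const
      hδ).eventually_gt_atTop M
  filter_upwards [hM, hsqrt] with n hn hn'
  refine (measure_mono fun ω (hω : δ < ‖X n ω - c‖) => ?_).trans hn.le
  show M < ‖Real.sqrt n • (X n ω - c)‖
  rw [norm_smul, Real.norm_of_nonneg (Real.sqrt_nonneg _)]
  exact hn'.trans_le (mul_le_mul_of_nonneg_left hω.le (Real.sqrt_nonneg _))

lemma tendsto_measure_union_of_tendsto_zero {s t : ℕ → Set Ω}
    (hs : Tendsto (fun n => P (s n)) atTop (𝓝 0)) (ht : Tendsto (fun n => P (t n)) atTop (𝓝 0)) :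
    Tendsto (fun n => P (s n ∪ t n)) atTop (𝓝 0) :=
  tendsto_of_tendsto_of_tendsto_of_le_of_le tendsto_const_nhds (by simpa using hs.add ht)
    (fun _ => zero_le) fun _ => measure_union_le _ _

end Probability

theorem l1_tuning_parameter_tendsto_zero_in_probability_general
    {Ω : Type*} [MeasurableSpace Ω] (P : Measure Ω) [IsProbabilityMeasure P]
    (D : ℕ) (ψ₀ : Fin D → ℝ) (hψ₀ : ∃ d, ψ₀ d ≠ 0)
    (S : Matrix (Fin D) (Fin D) ℝ) (hS : S.PosSemidef)
    (ψn : ℕ → Ω → Fin D → ℝ) (hψmeas : ∀ n, Measurable (ψn n))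
    (hdist : TendstoInDistribution P
      (fun n ω => Real.sqrt n • (ψn n ω - ψ₀)) (multivariateGaussian hS))
    (σ2n : ℕ → Ω → Fin D → ℝ)
    (hσpos : ∀ n ω d, 0 < σ2n n ω d)
    (hσprob : TendstoInProbability P σ2n (fun d => S d d))
    (lamn : ℕ → Ω → ℝ)
    (hlamnonneg : ∀ n ω, 0 ≤ lamn n ω)
    (εn : ℕ → Ω → ℝ) (hεprob : TendstoInProbability P εn 0)
    (hnear : ∀ n ω, l1Crit (lamn n ω) (ψn n ω) (σ2n n ω) n ≤
      (⨅ lam : {lam : ℝ // 0 ≤ lam}, l1Crit lam.1 (ψn n ω) (σ2n n ω) n) + εn n ω) :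
    TendstoInProbability P lamn 0 := by
  intro ε hε
  obtain ⟨d₀, hd₀⟩ := hψ₀
  set a := |ψ₀ d₀|
  set e := min ε (a / 2)
  have he : 0 < e := lt_min hε (by positivity)
  have : IsFiniteMeasure (multivariateGaussian hS) := by
    unfold _root_.multivariateGaussian; infer_instance
  have hψ := hdist.tendstoInProbability_of_sqrt_smul
    (fun n => (((hψmeas n).sub_const ψ₀).const_smul _).aemeasurable) (a / 2) (by positivity)
  have hC : ∀ᶠ n : ℕ in atTop, (∑ d, (S d d + 1)) / n < e ^ 2 / 8 :=
    (tendsto_const_div_atTop_nhds_zero_nat _).eventually (gt_mem_nhds (by positivity))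
  refine tendsto_of_tendsto_of_tendsto_of_le_of_le' tendsto_const_nhds
    (tendsto_measure_union_of_tendsto_zero (tendsto_measure_union_of_tendsto_zero hψ
      (hσprob 1 one_pos)) (hεprob (e ^ 2 / 8) (by positivity))) (.of_forall fun _ => zero_le) ?_
  filter_upwards [hC] with n hn
  refine measure_mono fun ω (hω : ε < ‖lamn n ω - 0‖) => ?_
  by_contra! hω'
  simp only [Set.mem_union, Set.mem_ofPred_eq, not_or, not_lt] at hω'
  obtain ⟨⟨hψω, hσω⟩, hεω⟩ := hω'
  have hψd : e ≤ |ψn n ω d₀| := by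
    linarith [min_le_right ε (a / 2), abs_apply_sub_le_of_norm_sub_le hψω d₀]
  have hσsum : (∑ d, σ2n n ω d) / n < e ^ 2 / 8 :=
    hn.trans_le' (div_le_div_of_nonneg_right (sum_le_sum_add_of_norm_sub_le hσω) n.cast_nonneg)
  have hεe : εn n ω ≤ e ^ 2 / 8 := (le_abs_self _).trans (by simpa using hεω)
  have hlam := lt_of_l1Crit_le_iInf_add (ψn n ω) n he (hlamnonneg n ω) hψd
    (fun d => (hσpos n ω d).le) hσsum hεe (hnear n ω)
  rw [sub_zero, Real.norm_of_nonneg (hlamnonneg n ω)] at hω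
  linarith [min_le_left ε (a / 2)]

/-- under the hypotheses of Theorem 5.1, the nearly-minimizing tuning parameter
`λ_n*` converges to `0` in probability (argmin-consistency step). -/
theorem l1_tuning_parameter_tendsto_zero_in_probability
    {Ω : Type*} [MeasurableSpace Ω] (P : Measure Ω) [IsProbabilityMeasure P]
    (D : ℕ) (hD : 1 ≤ D) (ψ₀ : Fin D → ℝ) (hψ₀ : ∃ d, ψ₀ d ≠ 0)
    (S : Matrix (Fin D) (Fin D) ℝ) (hS : S.PosSemidef) (hSdiag : ∀ d, 0 < S d d)
    (ψn : ℕ → Ω → Fin D → ℝ) (hψmeas : ∀ n, Measurable (ψn n))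
    (hdist : TendstoInDistribution P
      (fun n ω => Real.sqrt n • (ψn n ω - ψ₀)) (multivariateGaussian hS))
    (σ2n : ℕ → Ω → Fin D → ℝ) (hσmeas : ∀ n, Measurable (σ2n n))
    (hσpos : ∀ n ω d, 0 < σ2n n ω d)
    (hσprob : TendstoInProbability P σ2n (fun d => S d d))
    (lamn : ℕ → Ω → ℝ) (hlammeas : ∀ n, Measurable (lamn n))
    (hlamnonneg : ∀ n ω, 0 ≤ lamn n ω)
    (εn : ℕ → Ω → ℝ) (hεprob : TendstoInProbability P εn 0)
    (hnear : ∀ n ω, l1Crit (lamn n ω) (ψn n ω) (σ2n n ω) n ≤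
      (⨅ lam : {lam : ℝ // 0 ≤ lam}, l1Crit lam.1 (ψn n ω) (σ2n n ω) n) + εn n ω) :
    TendstoInProbability P lamn 0 :=
  l1_tuning_parameter_tendsto_zero_in_probability_general P D ψ₀ hψ₀ S hS ψn hψmeas hdist σ2n hσpos
    hσprob lamn hlamnonneg εn hεprob hnear
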